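/- arXiv:0709.4681 — 4 statements merged into one kernel-verified Lean document; each statement's English description precedes it below -/
import Mathlib

section
/- Let p > 0 and let x, y ∈ ℝ^n with |x| = 1 and |y| < 1/2. Then |x+y|^{-p} + |x-y|^{-p} - 2 ≥ p ( -|y|^2 + (1/2)(p+2) ⟨x,y⟩^2 - (1/4)(p+2)(p+4) ⟨x,y⟩^2 |y|^2 ), where ⟨x,y⟩ denotes the inner product (when x = e_1 this is y_1). -/
/-!
With `a = ⟪x, y⟫` and `T = ‖y‖²` one has `‖x ± y‖² = 1 ± 2a + T`, so the left-hand side is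
`u₊^(-q) + u₋^(-q) - 2` with `q = p/2` and `u± = 1 ± 2a + T`. The function `u ↦ u^(-q)` lies above
its Taylor polynomials of order one and three at `u = 1` (the remainder terms are convex with a
critical point at `1`). Summing the cubic bound over `u₊, u₋` leaves, beyond the claim, the error
`p(p+2)/24 · T²(6 - (p+4)T) + p(p+2)/4 · a²(2 - (p+4)T)`, which is nonnegative when `(p+4)T ≤ 2`;
when `(p+4)T > 2` the linear bound already gives the claim.
-/

open Real Set

theorem isMinOn_of_hasDerivAt_eq_zero_of_deriv2_nonneg {D : Set ℝ} (hD : Convex ℝ D)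
    (hDo : IsOpen D) {f f' f'' : ℝ → ℝ} (hf : ∀ x ∈ D, HasDerivAt f (f' x) x)
    (hf' : ∀ x ∈ D, HasDerivAt f' (f'' x) x) (hf'' : ∀ x ∈ D, 0 ≤ f'' x) {c : ℝ} (hc : c ∈ D)
    (hfc : f' c = 0) : IsMinOn f D c := by
  have hconv : ConvexOn ℝ D f :=
    convexOn_of_hasDerivWithinAt2_nonneg hD
      (fun x hx => (hf x hx).continuousAt.continuousWithinAt)
      (fun x hx => (hf x (interior_subset hx)).hasDerivWithinAt)
      (fun x hx => (hf' x (interior_subset hx)).hasDerivWithinAt)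
      (fun x hx => hf'' x (interior_subset hx))
  refine hconv.isMinOn_of_rightDeriv_eq_zero (by rwa [hDo.interior_eq]) ?_
  rw [(hf c hc).hasDerivWithinAt.derivWithin (uniqueDiffWithinAt_Ioi c), hfc]

theorem one_sub_mul_le_rpow_neg {r u : ℝ} (hr : 0 ≤ r) (hu : 0 < u) :
    1 - r * (u - 1) ≤ u ^ (-r) := by
  have hmin := isMinOn_of_hasDerivAt_eq_zero_of_deriv2_nonneg (convex_Ioi 0) isOpen_Ioi
    (f := fun w => w ^ (-r) + r * (w - 1)) (f' := fun w => -r * w ^ (-r - 1) + r)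
    (f'' := fun w => r * (r + 1) * w ^ (-(r + 2)))
    (fun w hw => by
      refine ((hasDerivAt_rpow_const (Or.inl (ne_of_gt hw))).fun_add
        (((hasDerivAt_id' w).sub_const 1).const_mul r)).congr_deriv ?_
      ring)
    (fun w hw => by
      refine (((hasDerivAt_rpow_const (p := -r - 1) (Or.inl (ne_of_gt hw))).const_mul
        (-r)).add_const r).congr_deriv ?_
      rw [show -r - 1 - 1 = -(r + 2) by ring]
      ring)
    (fun w hw => mul_nonneg (mul_nonneg hr (by linarith)) (rpow_nonneg (le_of_lt hw) _))
    (mem_Ioi.2 one_pos) (by simp)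
  have := isMinOn_iff.1 hmin u hu
  simp only [one_rpow, sub_self, mul_zero, add_zero] at this
  linarith

theorem taylor3_le_rpow_neg {q u : ℝ} (hq : 0 ≤ q) (hu : 0 < u) :
    1 - q * (u - 1) + q * (q + 1) / 2 * (u - 1) ^ 2 - q * (q + 1) * (q + 2) / 6 * (u - 1) ^ 3 ≤
      u ^ (-q) := by
  have hmin := isMinOn_of_hasDerivAt_eq_zero_of_deriv2_nonneg (convex_Ioi 0) isOpen_Ioi
    (f := fun w => w ^ (-q) + q * (w - 1) - q * (q + 1) / 2 * (w - 1) ^ 2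
      + q * (q + 1) * (q + 2) / 6 * (w - 1) ^ 3)
    (f' := fun w => -q * w ^ (-q - 1) + q - q * (q + 1) * (w - 1)
      + q * (q + 1) * (q + 2) / 2 * (w - 1) ^ 2)
    (f'' := fun w => q * (q + 1) * (w ^ (-(q + 2)) - 1 + (q + 2) * (w - 1)))
    (fun w hw => by
      have hs := (hasDerivAt_id' w).sub_const 1
      refine ((((hasDerivAt_rpow_const (Or.inl (ne_of_gt hw))).fun_add (hs.const_mul q)).fun_sub
        ((hs.fun_pow 2).const_mul (q * (q + 1) / 2))).fun_add
        ((hs.fun_pow 3).const_mul (q * (q + 1) * (q + 2) / 6))).congr_deriv ?_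
      ring)
    (fun w hw => by
      have hs := (hasDerivAt_id' w).sub_const 1
      refine (((((hasDerivAt_rpow_const (p := -q - 1) (Or.inl (ne_of_gt hw))).const_mul
        (-q)).add_const q).fun_sub (hs.const_mul (q * (q + 1)))).fun_add
        ((hs.fun_pow 2).const_mul (q * (q + 1) * (q + 2) / 2))).congr_deriv ?_
      rw [show -q - 1 - 1 = -(q + 2) by ring]
      ring)
    (fun w hw => mul_nonneg (by positivity)
      (by linarith [one_sub_mul_le_rpow_neg (r := q + 2) (by linarith) hw]))
    (mem_Ioi.2 one_pos) (by simp)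
  have := isMinOn_iff.1 hmin u hu
  simp only [one_rpow, sub_self, mul_zero, add_zero, ne_eq, OfNat.ofNat_ne_zero,
    not_false_eq_true, zero_pow] at this
  linarith

theorem neg_rpow_second_difference_ge {p a T : ℝ} (hp : 0 ≤ p)
    (hu : 0 < 1 + 2 * a + T) (hv : 0 < 1 - 2 * a + T) :
    p * (-T + 1 / 2 * (p + 2) * a ^ 2 - 1 / 4 * (p + 2) * (p + 4) * a ^ 2 * T) ≤
      (1 + 2 * a + T) ^ (-(p / 2)) + (1 - 2 * a + T) ^ (-(p / 2)) - 2 := by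
  have hq : 0 ≤ p / 2 := by linarith
  have hpp : 0 ≤ p * (p + 2) := by positivity
  rcases le_or_gt ((p + 4) * T) 2 with hsmall | hlarge
  · have h₁ : 0 ≤ p * (p + 2) * T ^ 2 * (6 - (p + 4) * T) :=
      mul_nonneg (by positivity) (by linarith)
    have h₂ : 0 ≤ p * (p + 2) * a ^ 2 * (2 - (p + 4) * T) :=
      mul_nonneg (by positivity) (by linarith)
    linarith [taylor3_le_rpow_neg hq hu, taylor3_le_rpow_neg hq hv]
  · have h : 0 ≤ p * (p + 2) * a ^ 2 * ((p + 4) * T - 2) :=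
      mul_nonneg (by positivity) (by linarith)
    linarith [one_sub_mul_le_rpow_neg hq hu, one_sub_mul_le_rpow_neg hq hv]

theorem rpow_neg_eq_sq_rpow {x : ℝ} (hx : 0 ≤ x) (p : ℝ) : x ^ (-p) = (x ^ 2) ^ (-(p / 2)) := by
  rw [← rpow_two, ← rpow_mul hx]
  ring_nf

theorem stmt_2 (n : ℕ) (p : ℝ) (hp : p > 0)
    (x y : EuclideanSpace ℝ (Fin n)) (hx : ‖x‖ = 1) (hy : ‖y‖ < 1 / 2) :
    ‖x + y‖ ^ (-p) + ‖x - y‖ ^ (-p) - 2 ≥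
      p * (-‖y‖ ^ 2 + (1 / 2) * (p + 2) * (inner ℝ x y : ℝ) ^ 2
        - (1 / 4) * (p + 2) * (p + 4) * (inner ℝ x y : ℝ) ^ 2 * ‖y‖ ^ 2) := by
  have hu : ‖x + y‖ ^ 2 = 1 + 2 * inner ℝ x y + ‖y‖ ^ 2 := by rw [norm_add_sq_real, hx]; ring
  have hv : ‖x - y‖ ^ 2 = 1 - 2 * inner ℝ x y + ‖y‖ ^ 2 := by rw [norm_sub_sq_real, hx]; ring
  have hu₀ : 0 < ‖x + y‖ := by linarith [norm_sub_le_norm_add x y]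
  have hv₀ : 0 < ‖x - y‖ := by linarith [norm_sub_norm_le x y]
  rw [rpow_neg_eq_sq_rpow (norm_nonneg _), rpow_neg_eq_sq_rpow (norm_nonneg _), hu, hv]
  exact neg_rpow_second_difference_ge hp.le (hu ▸ by positivity) (hv ▸ by positivity)
end

section
/- Let Γ : ℝ^n → ℝ be concave on the ball B_r (centered at origin), let x ∈ B_{r/2}, h > 0, and suppose that the set A = { y ∈ B_r \ B_{r/2} : Γ(y) < Γ(x) + ⟨y - x, v⟩ - h } satisfies |A| ≤ ε |B_r \ B_{r/2}| for a sufficiently small dimensional constant ε > 0, where v is an element of the superdifferential of Γ at x. Then Γ(y) ≥ Γ(x) + ⟨y - x, v⟩ - h for every y ∈ B_{r/2}. -/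
/-!
By concavity, the points of `B_r` where `Γ` stays above the affine function `Γ x + ⟪· - x, v⟫ - h`
form a convex set `C`, and by hypothesis `C` misses only a small part of the annulus `B_r \ B_{r/2}`.
Given `y ∈ B_{r/2}`, a homothety centred at `y` with ratio `-c`, `1 ≤ c < 5`, carries a small ball
near the outer sphere into the annulus on the far side of `y`. Since `c ≥ 1` it does not shrink measure,
so some `z` in the small ball has both `z` and its image in `C`; `y` lies between them.
-/

open MeasureTheory Metric AffineMap Module

section
variable {E : Type*} [NormedAddCommGroup E] [NormedSpace ℝ E]

lemma mem_segment_homothety_neg {c : ℝ} (hc : 0 ≤ c) (y z : E) :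
    y ∈ segment ℝ z (homothety y (-c) z) := by
  have h1c : 1 + c ≠ 0 := by positivity
  refine ⟨c / (1 + c), 1 / (1 + c), by positivity, by positivity, by field_simp; ring, ?_⟩
  rw [homothety_apply, vsub_eq_sub, vadd_eq_add]
  match_scalars <;> field_simp <;> ring

lemma dist_homothety_homothety (y : E) (t : ℝ) (a b : E) :
    dist (homothety y t a) (homothety y t b) = |t| * dist a b := by
  simp only [homothety_apply, vsub_eq_sub, vadd_eq_add, dist_eq_norm]
  rw [add_sub_add_right_eq_sub, ← smul_sub, sub_sub_sub_cancel_right, norm_smul, Real.norm_eq_abs]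

omit [NormedSpace ℝ E] in
lemma ball_subset_annulus {r : ℝ} {p : E} (hp : ‖p‖ = 3 * r / 4) :
    ball p (r / 4) ⊆ ball 0 r \ ball 0 (r / 2) := by
  intro z hz
  rw [mem_ball, dist_eq_norm] at hz
  have h₁ := norm_sub_norm_le z p
  have h₂ := norm_sub_norm_le p z
  rw [norm_sub_rev] at h₂
  simp only [Set.mem_sdiff, mem_ball_zero_iff, not_lt]
  constructor <;> linarith

lemma exists_ball_mapsTo_annulus [Nontrivial E] {r : ℝ} (hr : 0 < r) {y : E}
    (hy : ‖y‖ < r / 2) :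
    ∃ p : E, ∃ c : ℝ, 1 ≤ c ∧ ∀ z ∈ ball p (r / 40),
      z ∈ ball 0 r \ ball 0 (r / 2) ∧ homothety y (-c) z ∈ ball 0 r \ ball 0 (r / 2) := by
  obtain ⟨u, hu, hyu⟩ : ∃ u : E, ‖u‖ = 1 ∧ y = ‖y‖ • u := by
    rcases eq_or_ne y 0 with rfl | hy0
    · obtain ⟨u, hu⟩ := exists_norm_eq E zero_le_one
      exact ⟨u, hu, by simp⟩
    · exact ⟨‖y‖⁻¹ • y, by simp [norm_smul, hy0], by simp [smul_smul, hy0]⟩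
  set a := ‖y‖
  have ha := norm_nonneg y
  -- `c` is chosen so that the homothety maps `p = (3r/4) u` to the antipodal point `-p`
  set c := (3 * r / 4 + a) / (3 * r / 4 - a)
  have hden : 0 < 3 * r / 4 - a := by linarith
  have hc₁ : 1 ≤ c := by rw [le_div_iff₀ hden]; linarith
  have hc₅ : c < 5 := by rw [div_lt_iff₀ hden]; linarith
  have hTp : homothety y (-c) ((3 * r / 4) • u) = -((3 * r / 4) • u) := by
    rw [homothety_apply, vsub_eq_sub, vadd_eq_add, hyu]
    have : -c * (3 * r / 4 - a) + a = -(3 * r / 4) := by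
      simp only [c, neg_mul, div_mul_cancel₀ _ hden.ne']; ring
    rw [← sub_smul, smul_smul, ← add_smul, this, neg_smul]
  have hp : ‖(3 * r / 4) • u‖ = 3 * r / 4 := by
    rw [norm_smul, hu, mul_one, Real.norm_of_nonneg (by positivity)]
  refine ⟨(3 * r / 4) • u, c, hc₁, fun z hz => ⟨ball_subset_annulus hp ?_, ?_⟩⟩
  · exact ball_subset_ball (by linarith) hz
  · refine ball_subset_annulus (p := -((3 * r / 4) • u)) (by rw [norm_neg, hp]) ?_
    rw [mem_ball, ← hTp, dist_homothety_homothety, abs_neg, abs_of_pos (by linarith)]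
    have := mem_ball.1 hz
    nlinarith

variable [MeasurableSpace E] [BorelSpace E] [FiniteDimensional ℝ E]
  (μ : Measure E) [μ.IsAddHaarMeasure]

lemma measure_preimage_homothety_le {c : ℝ} (hc : 1 ≤ |c|) (y : E) (A : Set E) :
    μ (homothety y c ⁻¹' A) ≤ μ A :=
  calc μ (homothety y c ⁻¹' A)
      ≤ ENNReal.ofReal |c ^ finrank ℝ E| * μ (homothety y c ⁻¹' A) :=
        le_mul_of_one_le_left' (ENNReal.one_le_ofReal.2 (by rw [abs_pow]; exact one_le_pow₀ hc))
    _ = μ (homothety y c '' (homothety y c ⁻¹' A)) :=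
        (Measure.addHaar_image_homothety μ _ _ _).symm
    _ ≤ μ A := measure_mono (Set.image_preimage_subset _ _)

lemma two_mul_measure_le_lt_measure_ball [Nontrivial E] {r : ℝ} (hr : 0 < r) (p : E) {A : Set E}
    (hA : μ A ≤ ENNReal.ofReal ((1 / 40) ^ finrank ℝ E / 4) * μ (ball 0 r)) :
    2 * μ A < μ (ball p (r / 40)) := by
  have hball : μ (ball 0 r) = ENNReal.ofReal (40 ^ finrank ℝ E) * μ (ball p (r / 40)) := by
    rw [Measure.addHaar_ball μ 0 hr.le, Measure.addHaar_ball μ p (r := r / 40) (by positivity),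
      ← mul_assoc, ← ENNReal.ofReal_mul (by positivity), ← mul_pow]
    congr 3; ring
  have hpos : μ (ball p (r / 40)) ≠ 0 := (measure_ball_pos μ p (by positivity)).ne'
  calc 2 * μ A ≤ 2 * (ENNReal.ofReal ((1 / 40) ^ finrank ℝ E / 4) * μ (ball 0 r)) := by gcongr
    _ = μ (ball p (r / 40)) / 2 := by
      rw [hball, ← mul_assoc, ← mul_assoc, ENNReal.div_eq_inv_mul, ← ENNReal.ofReal_ofNat 2,
        ← ENNReal.ofReal_mul (by norm_num), ← ENNReal.ofReal_mul (by positivity),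
        ← ENNReal.ofReal_inv_of_pos (by norm_num)]
      congr 2
      rw [div_pow, one_pow]
      field_simp
      norm_num
    _ < μ (ball p (r / 40)) := ENNReal.half_lt_self hpos measure_ball_lt_top.ne

theorem ball_half_subset_of_convex_of_measure_annulus_diff_le [Nontrivial E] {C : Set E}
    (hC : Convex ℝ C) {r : ℝ} (hr : 0 < r)
    (hA : μ ((ball 0 r \ ball 0 (r / 2)) \ C) ≤
      ENNReal.ofReal ((1 / 40) ^ finrank ℝ E / 4) * μ (ball 0 r \ ball 0 (r / 2))) :
    ball 0 (r / 2) ⊆ C := by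
  intro y hy
  obtain ⟨p, c, hc, hmaps⟩ := exists_ball_mapsTo_annulus hr (mem_ball_zero_iff.1 hy)
  set A := (ball 0 r \ ball 0 (r / 2)) \ C
  have hsmall : μ (A ∪ homothety y (-c) ⁻¹' A) < μ (ball p (r / 40)) :=
    calc μ (A ∪ homothety y (-c) ⁻¹' A) ≤ μ A + μ A :=
          (measure_union_le _ _).trans <| add_le_add_right
            (measure_preimage_homothety_le μ (by rw [abs_neg, abs_of_nonneg (by linarith)]; exact hc)
              y A) _
      _ = 2 * μ A := (two_mul _).symm
      _ < μ (ball p (r / 40)) :=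
          two_mul_measure_le_lt_measure_ball μ hr p
            (hA.trans (by gcongr; exact Set.sdiff_subset))
  obtain ⟨z, hz, hzA⟩ := Set.not_subset.1 fun h => (measure_mono h).not_gt hsmall
  obtain ⟨hzA₁, hzA₂⟩ := not_or.1 hzA
  obtain ⟨hz_ann, hTz_ann⟩ := hmaps z hz
  have hzC : z ∈ C := by_contra fun h => hzA₁ ⟨hz_ann, h⟩
  have hTzC : homothety y (-c) z ∈ C := by_contra fun h => hzA₂ ⟨hTz_ann, h⟩
  exact hC.segment_subset hzC hTzC (mem_segment_homothety_neg (by linarith) y z)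

end

theorem stmt_4 (n : ℕ) :
    ∃ ε : ℝ, ε > 0 ∧
      ∀ (r : ℝ), 0 < r →
      ∀ (Γ : EuclideanSpace ℝ (Fin n) → ℝ),
        ConcaveOn ℝ (ball (0 : EuclideanSpace ℝ (Fin n)) r) Γ →
      ∀ x ∈ ball (0 : EuclideanSpace ℝ (Fin n)) (r / 2),
      ∀ (h : ℝ), 0 < h →
      ∀ (v : EuclideanSpace ℝ (Fin n)),
        (∀ z ∈ ball (0 : EuclideanSpace ℝ (Fin n)) r,
          Γ z ≤ Γ x + (inner ℝ (z - x) v : ℝ)) →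
        volume {y | y ∈ ball (0 : EuclideanSpace ℝ (Fin n)) r \ ball 0 (r / 2) ∧
            Γ y < Γ x + (inner ℝ (y - x) v : ℝ) - h} ≤
          ENNReal.ofReal ε *
            volume (ball (0 : EuclideanSpace ℝ (Fin n)) r \ ball 0 (r / 2)) →
      ∀ y ∈ ball (0 : EuclideanSpace ℝ (Fin n)) (r / 2),
        Γ y ≥ Γ x + (inner ℝ (y - x) v : ℝ) - h := by
  refine ⟨(1 / 40) ^ n / 4, by positivity, ?_⟩
  intro r hr Γ hΓ x _ h hh v _ hA y hy
  rcases isEmpty_or_nonempty (Fin n) with hn | hn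
  · rw [Subsingleton.elim y x, sub_self, inner_zero_left]
    linarith
  set C := {w ∈ ball 0 r | Γ x - inner ℝ v x - h ≤ Γ w - inner ℝ v w}
  have hC : Convex ℝ C := (hΓ.sub ((innerₛₗ ℝ v).convexOn (convex_ball 0 r))).convex_ge _
  have hbad : (ball 0 r \ ball 0 (r / 2)) \ C ⊆
      {w | w ∈ ball 0 r \ ball 0 (r / 2) ∧ Γ w < Γ x + inner ℝ (w - x) v - h} := by
    rintro w ⟨hw, hwC⟩
    refine ⟨hw, ?_⟩
    simp only [C, Set.mem_ofPred_eq, not_and, not_le] at hwC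
    rw [inner_sub_left, real_inner_comm v w, real_inner_comm v x]
    linarith [hwC hw.1]
  have hyC := ball_half_subset_of_convex_of_measure_annulus_diff_le volume hC hr
    ((measure_mono hbad).trans (by rwa [finrank_euclideanSpace_fin])) hy
  rw [ge_iff_le, inner_sub_left, real_inner_comm v y, real_inner_comm v x]
  linarith [hyC.2]
end

section
/- Let f ∈ L^∞(ℝ^n) and let (g_α)_{α∈A} be a family of measurable functions with |g_α(x)| ≤ g(x) for all α and a.e. x, where g ∈ L^1(ℝ^n). Then the family of convolutions (f ∗ g_α)_{α∈A} is (uniformly) equicontinuous on every compact subset of ℝ^n. -/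
/-!
The bound |f ∗ gα(x) - f ∗ gα(p)| ≤ ∫ |f(x - z) - f(p - z)| w(z) dz, with w = |g|, does not depend
on α, so it suffices that the right-hand side tends to 0 as x → p. With f̃ = f(p - ·) and h = p - x
it is ∫ |f̃(z + h) - f̃(z)| w(z) dz, and the splitting
(f̃(u + h) - f̃(u)) w(u) = (f̃w)(u + h) - (f̃w)(u) - f̃(u + h) (w(u + h) - w(u))
reduces it to the continuity of translation in L¹, applied to f̃w and to w. The family is therefore
equicontinuous, and an equicontinuous family is uniformly equicontinuous on a compact set.
-/

open MeasureTheory Filter Topology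

theorem IsCompact.uniformEquicontinuousOn_of_equicontinuousOn {ι α β : Type*} [UniformSpace α]
    [UniformSpace β] {F : ι → β → α} {K : Set β} (hK : IsCompact K) (hF : EquicontinuousOn F K) :
    UniformEquicontinuousOn F K := by
  rw [equicontinuousOn_iff_continuousOn] at hF
  rw [uniformEquicontinuousOn_iff_uniformContinuousOn]
  exact hK.uniformContinuousOn_of_continuous hF

theorem Metric.uniformEquicontinuousOn_iff {ι α β : Type*} [PseudoMetricSpace α]
    [PseudoMetricSpace β] {F : ι → β → α} {S : Set β} :
    UniformEquicontinuousOn F S ↔ ∀ ε > 0, ∃ δ > 0, ∀ x ∈ S, ∀ y ∈ S, dist x y < δ →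
      ∀ i, dist (F i x) (F i y) < ε := by
  rw [(uniformity_basis_dist.inf_principal _).uniformEquicontinuousOn_iff uniformity_basis_dist]
  simp only [Set.mem_inter_iff, Set.mem_ofPred_eq, Set.mem_prod]
  grind

theorem abs_integral_mul_sub_integral_mul_le {α : Type*} [MeasurableSpace α] {μ : Measure α}
    {a b k w : α → ℝ} {C : ℝ} (ha : AEStronglyMeasurable a μ) (hb : AEStronglyMeasurable b μ)
    (haC : ∀ x, |a x| ≤ C) (hbC : ∀ x, |b x| ≤ C) (hk : AEStronglyMeasurable k μ)
    (hw : Integrable w μ) (hkw : ∀ᵐ x ∂μ, |k x| ≤ w x) :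
    |(∫ x, a x * k x ∂μ) - ∫ x, b x * k x ∂μ| ≤ ∫ x, |a x - b x| * w x ∂μ := by
  have hk_int : Integrable k μ := hw.mono' hk hkw
  rw [← integral_sub (hk_int.bdd_mul ha (ae_of_all _ haC)) (hk_int.bdd_mul hb (ae_of_all _ hbC))]
  refine abs_integral_le_integral_abs.trans <|
    integral_mono_of_nonneg (ae_of_all _ fun x => abs_nonneg _) ?_ ?_
  · refine hw.bdd_mul (c := C + C) (ha.sub hb).norm (ae_of_all _ fun x => ?_)
    rw [Real.norm_eq_abs, abs_abs]
    exact (abs_sub _ _).trans (add_le_add (haC x) (hbC x))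
  · filter_upwards [hkw] with x hx
    rw [← sub_mul, abs_mul]
    exact mul_le_mul_of_nonneg_left hx (abs_nonneg _)

section Translation

variable {G : Type*} [AddCommGroup G] [TopologicalSpace G] [IsTopologicalAddGroup G]
  [MeasurableSpace G] [BorelSpace G] {μ : Measure G} [μ.IsAddRightInvariant]
  [μ.InnerRegularCompactLTTop] [IsLocallyFiniteMeasure μ]

theorem tendsto_integral_norm_comp_add_right_sub {E : Type*} [NormedAddCommGroup E] {φ : G → E}
    (hφ : Integrable φ μ) :
    Tendsto (fun h => ∫ u, ‖φ (u + h) - φ u‖ ∂μ) (𝓝 0) (𝓝 0) := by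
  let τ : G → C(G, G) := fun h => ⟨(· + h), continuous_add_const h⟩
  have hτ : Continuous τ :=
    ContinuousMap.continuous_of_continuous_uncurry _ (continuous_snd.add continuous_fst)
  have hτμ : ∀ h, MeasurePreserving (τ h) μ μ := measurePreserving_add_right μ
  let T : G → Lp E 1 μ := fun h => Lp.compMeasurePreserving (τ h) (hτμ h) (hφ.toL1 φ)
  have hT : Continuous T := continuous_const.compMeasurePreservingLp hτ hτμ ENNReal.one_ne_top
  have hTφ : ∀ h, T h =ᵐ[μ] fun u => φ (u + h) := fun h =>
    (Lp.coeFn_compMeasurePreserving _ _).trans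
      ((hτμ h).quasiMeasurePreserving.ae_eq hφ.coeFn_toL1)
  refine (tendsto_iff_norm_sub_tendsto_zero.mp (hT.tendsto 0)).congr fun h => ?_
  rw [L1.norm_eq_integral_norm]
  refine integral_congr_ae ?_
  filter_upwards [Lp.coeFn_sub (T h) (T 0), hTφ h, hTφ 0] with u hu hh h0
  rw [hu, Pi.sub_apply, hh, h0, add_zero]

theorem tendsto_integral_abs_comp_add_right_sub_mul {f w : G → ℝ} {C : ℝ} (hf : Measurable f)
    (hfC : ∀ x, |f x| ≤ C) (hw : Integrable w μ) (hw0 : ∀ x, 0 ≤ w x) :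
    Tendsto (fun h => ∫ u, |f (u + h) - f u| * w u ∂μ) (𝓝 0) (𝓝 0) := by
  have hfw : Integrable (fun u => f u * w u) μ :=
    hw.bdd_mul hf.aestronglyMeasurable (ae_of_all _ hfC)
  have hδfw : ∀ h, Integrable (fun u => ‖f (u + h) * w (u + h) - f u * w u‖) μ := fun h =>
    ((hfw.comp_add_right h).sub hfw).norm
  have hδw : ∀ h, Integrable (fun u => C * ‖w (u + h) - w u‖) μ := fun h =>
    ((hw.comp_add_right h).sub hw).norm.const_mul C
  have hbound : ∀ h, ∫ u, |f (u + h) - f u| * w u ∂μ ≤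
      (∫ u, ‖f (u + h) * w (u + h) - f u * w u‖ ∂μ) + C * ∫ u, ‖w (u + h) - w u‖ ∂μ := by
    intro h
    rw [← integral_const_mul, ← integral_add (hδfw h) (hδw h)]
    refine integral_mono_of_nonneg (ae_of_all _ fun u => mul_nonneg (abs_nonneg _) (hw0 u))
      ((hδfw h).add (hδw h)) (ae_of_all _ fun u => ?_)
    have hprod : (f (u + h) - f u) * w u =
        (f (u + h) * w (u + h) - f u * w u) - f (u + h) * (w (u + h) - w u) := by ring
    calc |f (u + h) - f u| * w u = |(f (u + h) - f u) * w u| := by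
          rw [abs_mul, abs_of_nonneg (hw0 u)]
      _ ≤ |f (u + h) * w (u + h) - f u * w u| + |f (u + h)| * |w (u + h) - w u| := by
          rw [hprod, ← abs_mul]; exact abs_sub _ _
      _ ≤ _ := by
          simp only [Real.norm_eq_abs]
          gcongr
          exact hfC _
  have hlim := (tendsto_integral_norm_comp_add_right_sub hfw).add
    ((tendsto_integral_norm_comp_add_right_sub hw).const_mul C)
  rw [mul_zero, add_zero] at hlim
  exact squeeze_zero (fun h => integral_nonneg fun u => mul_nonneg (abs_nonneg _) (hw0 u))
    hbound hlim

theorem equicontinuous_integral_comp_sub_mul {ι : Type*} {f w : G → ℝ} {C : ℝ}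
    (hf : Measurable f) (hfC : ∀ x, |f x| ≤ C) {k : ι → G → ℝ}
    (hk : ∀ i, AEStronglyMeasurable (k i) μ) (hw : Integrable w μ) (hw0 : ∀ x, 0 ≤ w x)
    (hkw : ∀ i, ∀ᵐ z ∂μ, |k i z| ≤ w z) :
    Equicontinuous fun i x => ∫ z, f (x - z) * k i z ∂μ := by
  intro p
  have hsub : Tendsto (fun x => p - x) (𝓝 p) (𝓝 0) :=
    (continuous_const.sub continuous_id).tendsto' p 0 (sub_self p)
  have hmod := (tendsto_integral_abs_comp_add_right_sub_mul (hf.comp (measurable_const_sub p))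
    (fun z => hfC (p - z)) hw hw0).comp hsub
  refine Metric.equicontinuousAt_of_continuity_modulus _ hmod _ (Eventually.of_forall fun x i => ?_)
  rw [Real.dist_eq]
  refine (abs_integral_mul_sub_integral_mul_le
    (hf.comp (measurable_const_sub p)).aestronglyMeasurable
    (hf.comp (measurable_const_sub x)).aestronglyMeasurable (fun z => hfC _) (fun z => hfC _)
    (hk i) hw (hkw i)).trans_eq ?_
  refine integral_congr_ae (ae_of_all _ fun z => ?_)
  simp only [Function.comp_apply, show p - (z + (p - x)) = x - z by abel, abs_sub_comm]

end Translation

theorem stmt_6 (n : ℕ) {A : Type*}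
    (f : EuclideanSpace ℝ (Fin n) → ℝ) (hf : Measurable f)
    (Cf : ℝ) (hfb : ∀ x, |f x| ≤ Cf)
    (gα : A → EuclideanSpace ℝ (Fin n) → ℝ) (hgα : ∀ α, Measurable (gα α))
    (g : EuclideanSpace ℝ (Fin n) → ℝ) (hg : Integrable g)
    (hdom : ∀ α, ∀ᵐ x, |gα α x| ≤ g x) :
    ∀ (K : Set (EuclideanSpace ℝ (Fin n))), IsCompact K →
    ∀ ε : ℝ, ε > 0 → ∃ δ : ℝ, δ > 0 ∧
      ∀ (α : A), ∀ x ∈ K, ∀ y ∈ K, ‖x - y‖ < δ →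
        |(∫ z, f (x - z) * gα α z) - ∫ z, f (y - z) * gα α z| < ε := by
  intro K hK ε hε
  have hequi : Equicontinuous fun α x => ∫ z, f (x - z) * gα α z :=
    equicontinuous_integral_comp_sub_mul hf hfb (fun α => (hgα α).aestronglyMeasurable) hg.abs
      (fun z => abs_nonneg (g z)) (fun α => (hdom α).mono fun z hz => hz.trans (le_abs_self _))
  obtain ⟨δ, hδ, hδK⟩ := Metric.uniformEquicontinuousOn_iff.mp
    (hK.uniformEquicontinuousOn_of_equicontinuousOn (hequi.equicontinuousOn K)) ε hε
  refine ⟨δ, hδ, fun α x hx y hy hxy => ?_⟩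
  simpa only [Real.dist_eq] using hδK x hx y hy (by rwa [dist_eq_norm]) α
end

section
/- Let u : ℝ^n → ℝ be bounded, and suppose u is semiconvex (there exists C such that u(x) + C|x|² is convex) and -v is semiconvex where v : ℝ^n → ℝ is bounded. If a C² function φ touches u - v from above at a point x (φ(x) = u(x) - v(x) and φ ≥ u - v near x), then u is punctually C^{1,1} at x from above and below: there exist a vector p and a constant M with |u(x+y) - u(x) - ⟨p,y⟩| ≤ M|y|² for all small y, and similarly for v. -/
/-!
A supporting hyperplane of the convex function `u + C‖·‖²` at `x` puts a paraboloid below `u`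
touching it at `x`, and likewise one above `v`; Taylor's formula puts one above `φ`. Since
`u ≤ v + φ` and `-v ≤ -u + φ` near `x`, with equality at `x`, this also gives a paraboloid above
`u` and one below `v`. A function squeezed between two paraboloids touching it at `x` is punctually
`C^{1,1}` there: the linear parts of the two paraboloids agree, because their sum plus a quadratic
has a local minimum at `0`, so its derivative there vanishes.
-/

open Set Filter Topology Metric

variable {E : Type*}

theorem ConvexOn.exists_forall_add_le [NormedAddCommGroup E] [NormedSpace ℝ E]
    [FiniteDimensional ℝ E] {s : Set E} {f : E → ℝ} (hf : ConvexOn ℝ s f) (hs : IsOpen s)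
    {x : E} (hx : x ∈ s) :
    ∃ L : StrongDual ℝ E, ∀ y ∈ s, f x + L (y - x) ≤ f y := by
  -- separate `(x, f x)` from the open strict epigraph `S`
  set S : Set (E × ℝ) := {q | q.1 ∈ s ∧ f q.1 < q.2}
  have hS : IsOpen S :=
    (((hf.continuousOn hs).comp continuousOn_fst fun _ hq => hq).prodMk continuousOn_snd)
      |>.isOpen_inter_preimage (hs.preimage continuous_fst)
        (isOpen_lt continuous_fst continuous_snd)
  obtain ⟨ℓ, hℓ⟩ := geometric_hahn_banach_open_point hf.convex_strict_epigraph hS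
    (x := (x, f x)) (by simp)
  have hℓ_apply (z : E) (t : ℝ) : ℓ (z, t) = ℓ (z, 0) + t * ℓ (0, 1) := by
    rw [← smul_eq_mul, ← map_smul, ← map_add]; simp
  have hc : ℓ (0, 1) < 0 := by
    have := hℓ (x, f x + 1) ⟨hx, by simp⟩
    rw [hℓ_apply x (f x + 1), hℓ_apply x (f x)] at this
    linarith
  have hgraph : ∀ y ∈ s, ℓ (y, f y) ≤ ℓ (x, f x) := fun y hy =>
    le_of_tendsto ((ℓ.continuous.comp (Continuous.prodMk_right y)).tendsto (f y)
      |>.mono_left nhdsWithin_le_nhds)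
      (eventually_nhdsWithin_of_forall (s := Ioi (f y)) fun t ht => (hℓ (y, t) ⟨hy, ht⟩).le)
  refine ⟨(-ℓ (0, 1))⁻¹ • ℓ.comp (.inl ℝ E ℝ), fun y hy => ?_⟩
  have hy_graph := hgraph y hy
  rw [hℓ_apply y, hℓ_apply x] at hy_graph
  have hsub : ℓ (y - x, 0) = ℓ (y, 0) - ℓ (x, 0) := by rw [← map_sub]; simp
  have key : (-ℓ (0, 1))⁻¹ * ℓ (y - x, 0) ≤ f y - f x := by
    rw [inv_mul_le_iff₀ (by linarith), hsub]; linarith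
  simpa using key

theorem ContDiffAt.exists_eventually_norm_sub_sub_fderiv_le {F : Type*}
    [NormedAddCommGroup E] [NormedSpace ℝ E] [NormedAddCommGroup F] [NormedSpace ℝ F]
    {f : E → F} {x : E} (hf : ContDiffAt ℝ 2 f x) :
    ∃ K : ℝ, ∀ᶠ y in 𝓝 0, ‖f (x + y) - f x - fderiv ℝ f x y‖ ≤ K * ‖y‖ ^ 2 := by
  obtain ⟨K, hK0, hK⟩ :=
    ((hf.fderiv_right (m := 1) (by norm_num)).differentiableAt one_ne_zero).isBigO_sub.exists_pos
  have hdiff : ∀ᶠ z in 𝓝 x, DifferentiableAt ℝ f z :=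
    (hf.eventually (by simp)).mono fun z hz => hz.differentiableAt (by norm_num)
  obtain ⟨r, hr, hball⟩ := Metric.eventually_nhds_iff_ball.1 (hK.bound.and hdiff)
  refine ⟨K, ?_⟩
  filter_upwards [ball_mem_nhds 0 hr] with y hy
  have hsub : closedBall x ‖y‖ ⊆ ball x r := closedBall_subset_ball (by simpa using hy)
  have hmvt := (convex_closedBall x ‖y‖).norm_image_sub_le_of_norm_fderiv_le'
    (y := x + y) (C := K * ‖y‖)
    (fun z hz => (hball z (hsub hz)).2)
    (fun z hz => (hball z (hsub hz)).1.trans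
      (mul_le_mul_of_nonneg_left (mem_closedBall_iff_norm.1 hz) hK0.le))
    (mem_closedBall_self (norm_nonneg y)) (by simp)
  simpa [pow_two, mul_assoc] using hmvt

section Paraboloid

variable [NormedAddCommGroup E] [InnerProductSpace ℝ E] {f g : E → ℝ} {x : E}

def HasUpperParaboloidAt (f : E → ℝ) (x : E) : Prop :=
  ∃ (L : StrongDual ℝ E) (C : ℝ), ∀ᶠ y in 𝓝 0, f (x + y) ≤ f x + L y + C * ‖y‖ ^ 2

def PunctuallyC11At (f : E → ℝ) (x : E) : Prop :=
  ∃ (p : E) (M r : ℝ), 0 < M ∧ 0 < r ∧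
    ∀ y : E, ‖y‖ < r → |f (x + y) - f x - inner ℝ p y| ≤ M * ‖y‖ ^ 2

theorem HasUpperParaboloidAt.add (hf : HasUpperParaboloidAt f x)
    (hg : HasUpperParaboloidAt g x) : HasUpperParaboloidAt (fun y => f y + g y) x := by
  obtain ⟨L₁, C₁, h₁⟩ := hf
  obtain ⟨L₂, C₂, h₂⟩ := hg
  refine ⟨L₁ + L₂, C₁ + C₂, ?_⟩
  filter_upwards [h₁, h₂] with y hy₁ hy₂
  simp only [add_apply]
  linarith

theorem HasUpperParaboloidAt.of_eventuallyLE (hg : HasUpperParaboloidAt g x)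
    (hfg : f ≤ᶠ[𝓝 x] g) (hx : f x = g x) : HasUpperParaboloidAt f x := by
  obtain ⟨L, C, h⟩ := hg
  have hfg' : ∀ᶠ y in 𝓝 (0 : E), f (x + y) ≤ g (x + y) :=
    (continuous_const_add x).tendsto' 0 x (add_zero x) |>.eventually hfg
  refine ⟨L, C, ?_⟩
  filter_upwards [h, hfg'] with y hy hfy
  linarith

theorem ContDiffAt.hasUpperParaboloidAt (hf : ContDiffAt ℝ 2 f x) :
    HasUpperParaboloidAt f x := by
  obtain ⟨K, hK⟩ := hf.exists_eventually_norm_sub_sub_fderiv_le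
  refine ⟨fderiv ℝ f x, K, ?_⟩
  filter_upwards [hK] with y hy
  rw [Real.norm_eq_abs] at hy
  linarith [(abs_le.1 hy).2]

theorem ConvexOn.hasUpperParaboloidAt_neg [FiniteDimensional ℝ E] {s : Set E} {C : ℝ}
    (hf : ConvexOn ℝ s (fun y => f y + C * ‖y‖ ^ 2)) (hs : IsOpen s) (hx : x ∈ s) :
    HasUpperParaboloidAt (fun y => -f y) x := by
  obtain ⟨L, hL⟩ := hf.exists_forall_add_le hs hx
  refine ⟨(2 * C) • innerSL ℝ x - L, C, ?_⟩
  filter_upwards [(continuous_const_add x).tendsto' 0 x (add_zero x) |>.eventually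
    (hs.mem_nhds hx)] with y hy
  have := hL (x + y) hy
  simp only [add_sub_cancel_left, norm_add_sq_real] at this
  simp only [sub_apply, smul_apply, innerSL_apply_apply, smul_eq_mul]
  linarith

theorem HasUpperParaboloidAt.punctuallyC11At [CompleteSpace E] (hf : HasUpperParaboloidAt f x)
    (hf' : HasUpperParaboloidAt (fun y => -f y) x) : PunctuallyC11At f x := by
  obtain ⟨L₁, A, h₁⟩ := hf
  obtain ⟨L₂, B, h₂⟩ := hf'
  have hmin : IsLocalMin (fun y => (L₁ + L₂) y + (A + B) * ‖y‖ ^ 2) 0 := by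
    filter_upwards [h₁, h₂] with y hy₁ hy₂
    simp only [add_apply, map_zero, norm_zero]
    linarith
  have hsq := (hasStrictFDerivAt_norm_sq (0 : E)).hasFDerivAt.const_mul (A + B)
  rw [map_zero, smul_zero, smul_zero] at hsq
  have hderiv : HasFDerivAt (fun y => (L₁ + L₂) y + (A + B) * ‖y‖ ^ 2) (L₁ + L₂) (0 : E) :=
    ((L₁ + L₂).hasFDerivAt.add hsq).congr_fderiv (add_zero _)
  have hL : ∀ y, L₂ y = -L₁ y := fun y => by
    simpa [eq_neg_iff_add_eq_zero, add_comm] using congr($(hmin.hasFDerivAt_eq_zero hderiv) y)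
  obtain ⟨r, hr, hbound⟩ := Metric.eventually_nhds_iff.1 (h₁.and h₂)
  refine ⟨(InnerProductSpace.toDual ℝ E).symm L₁, |A| + |B| + 1, r, by positivity, hr,
    fun y hy => ?_⟩
  obtain ⟨hy₁, hy₂⟩ := hbound (by simpa using hy)
  rw [InnerProductSpace.toDual_symm_apply, abs_le]
  dsimp only at hy₂
  rw [hL] at hy₂
  have hA := mul_le_mul_of_nonneg_right (le_abs_self A) (sq_nonneg ‖y‖)
  have hB := mul_le_mul_of_nonneg_right (le_abs_self B) (sq_nonneg ‖y‖)
  have := mul_nonneg (abs_nonneg A) (sq_nonneg ‖y‖)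
  have := mul_nonneg (abs_nonneg B) (sq_nonneg ‖y‖)
  constructor <;> linarith [sq_nonneg ‖y‖]

end Paraboloid

theorem stmt_10_general (n : ℕ) (u v : EuclideanSpace ℝ (Fin n) → ℝ)
    (hu : ∃ C : ℝ, ConvexOn ℝ Set.univ (fun x => u x + C * ‖x‖ ^ 2))
    (hv : ∃ C : ℝ, ConvexOn ℝ Set.univ (fun x => -v x + C * ‖x‖ ^ 2))
    (φ : EuclideanSpace ℝ (Fin n) → ℝ) (hφ : ContDiff ℝ 2 φ)
    (x : EuclideanSpace ℝ (Fin n))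
    (htouch : φ x = u x - v x ∧ ∀ᶠ y in nhds x, u y - v y ≤ φ y) :
    (∃ (p : EuclideanSpace ℝ (Fin n)) (M r : ℝ), 0 < M ∧ 0 < r ∧
      ∀ y : EuclideanSpace ℝ (Fin n), ‖y‖ < r →
        |u (x + y) - u x - (inner ℝ p y : ℝ)| ≤ M * ‖y‖ ^ 2) ∧
    (∃ (p : EuclideanSpace ℝ (Fin n)) (M r : ℝ), 0 < M ∧ 0 < r ∧
      ∀ y : EuclideanSpace ℝ (Fin n), ‖y‖ < r →
        |v (x + y) - v x - (inner ℝ p y : ℝ)| ≤ M * ‖y‖ ^ 2) := by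
  obtain ⟨Cu, hu⟩ := hu
  obtain ⟨Cv, hv⟩ := hv
  obtain ⟨hφx, hle⟩ := htouch
  have hu_below := hu.hasUpperParaboloidAt_neg isOpen_univ (mem_univ x)
  have hv_above : HasUpperParaboloidAt v x := by
    simpa using hv.hasUpperParaboloidAt_neg isOpen_univ (mem_univ x)
  have hφ_above := hφ.contDiffAt.hasUpperParaboloidAt (x := x)
  have hu_above : HasUpperParaboloidAt u x :=
    (hv_above.add hφ_above).of_eventuallyLE (hle.mono fun y hy => by linarith) (by linarith)
  have hv_below : HasUpperParaboloidAt (fun y => -v y) x :=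
    (hu_below.add hφ_above).of_eventuallyLE (hle.mono fun y hy => by linarith) (by linarith)
  exact ⟨hu_above.punctuallyC11At hu_below, hv_above.punctuallyC11At hv_below⟩

theorem stmt_10 (n : ℕ) (u v : EuclideanSpace ℝ (Fin n) → ℝ)
    (hub : ∃ C : ℝ, ∀ x, |u x| ≤ C) (hvb : ∃ C : ℝ, ∀ x, |v x| ≤ C)
    (hu : ∃ C : ℝ, ConvexOn ℝ Set.univ (fun x => u x + C * ‖x‖ ^ 2))
    (hv : ∃ C : ℝ, ConvexOn ℝ Set.univ (fun x => -v x + C * ‖x‖ ^ 2))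
    (φ : EuclideanSpace ℝ (Fin n) → ℝ) (hφ : ContDiff ℝ 2 φ)
    (x : EuclideanSpace ℝ (Fin n))
    (htouch : φ x = u x - v x ∧ ∀ᶠ y in nhds x, u y - v y ≤ φ y) :
    (∃ (p : EuclideanSpace ℝ (Fin n)) (M r : ℝ), 0 < M ∧ 0 < r ∧
      ∀ y : EuclideanSpace ℝ (Fin n), ‖y‖ < r →
        |u (x + y) - u x - (inner ℝ p y : ℝ)| ≤ M * ‖y‖ ^ 2) ∧
    (∃ (p : EuclideanSpace ℝ (Fin n)) (M r : ℝ), 0 < M ∧ 0 < r ∧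
      ∀ y : EuclideanSpace ℝ (Fin n), ‖y‖ < r →
        |v (x + y) - v x - (inner ℝ p y : ℝ)| ≤ M * ‖y‖ ^ 2) :=
  stmt_10_general n u v hu hv φ hφ x htouch
end
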